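/- Let f : ℝ^D → ℝ^k be piecewise affine with f(x) = A[x]x + b[x], and suppose the loss ℓ(·, y) is convex and K₂-Lipschitz in its first argument, ‖x_i‖₂ ≤ R for all training points, ‖A[x]‖₂ ≤ K₁ for all x, and ‖u_{ij}‖₂ ≤ ε. Then the sum over i = 1..n, j = 1..m of ℓ(f(x_i + u_{ij}), y_i) is bounded above by Σᵢ m·ℓ(f(x_i), y_i) + R·K₂·Σ_{i,j} ‖A[x_i+u_{ij}] − A[x_i]‖₂ + K₂·Σ_{i,j} ‖b[x_i+u_{ij}] − b[x_i]‖₂ + K₁·K₂·m·n·ε. -/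

import Mathlib

/-!
Write `A' = A[x + u]`, `b' = b[x + u]`. Then
`f(x + u) - f(x) = (A' - A[x]) x + A' u + (b' - b[x])`, whose norm is at most
`R ‖A' - A[x]‖ + ‖b' - b[x]‖ + K₁ ε`. Since the loss is `K₂`-Lipschitz, each augmented
loss exceeds the clean loss by at most `K₂` times this, and summing over all `i, j` gives
the bound.
-/

open Finset

section

variable {𝕜 E F : Type*} [NontriviallyNormedField 𝕜]
  [SeminormedAddCommGroup E] [NormedSpace 𝕜 E] [SeminormedAddCommGroup F] [NormedSpace 𝕜 F]

theorem norm_affine_add_sub_affine_le (A A' : E →L[𝕜] F) (b b' : F) (x u : E) :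
    ‖(A' (x + u) + b') - (A x + b)‖ ≤ ‖A' - A‖ * ‖x‖ + ‖b' - b‖ + ‖A'‖ * ‖u‖ := by
  have hsplit : (A' (x + u) + b') - (A x + b) = (A' - A) x + (b' - b) + A' u := by
    simp only [sub_apply, map_add]
    abel
  rw [hsplit]
  calc ‖(A' - A) x + (b' - b) + A' u‖
      ≤ ‖(A' - A) x‖ + ‖b' - b‖ + ‖A' u‖ := norm_add₃_le
    _ ≤ ‖A' - A‖ * ‖x‖ + ‖b' - b‖ + ‖A'‖ * ‖u‖ := by
      gcongr <;> exact ContinuousLinearMap.le_opNorm _ _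

theorem LipschitzWith.comp_affine_add_le {g : F → ℝ} {K : NNReal} (hg : LipschitzWith K g)
    (A A' : E →L[𝕜] F) (b b' : F) {x u : E} {R K₁ ε : ℝ}
    (hx : ‖x‖ ≤ R) (hA' : ‖A'‖ ≤ K₁) (hu : ‖u‖ ≤ ε) :
    g (A' (x + u) + b') ≤ g (A x + b) + (R * K * ‖A' - A‖ + K * ‖b' - b‖ + K₁ * K * ε) := by
  have hdist : dist (A' (x + u) + b') (A x + b) ≤ ‖A' - A‖ * R + ‖b' - b‖ + K₁ * ε := by
    rw [dist_eq_norm]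
    refine (norm_affine_add_sub_affine_le A A' b b' x u).trans ?_
    gcongr
    exact (norm_nonneg _).trans hA'
  calc g (A' (x + u) + b') ≤ g (A x + b) + K * dist (A' (x + u) + b') (A x + b) :=
        hg.le_add_mul _ _
    _ ≤ g (A x + b) + K * (‖A' - A‖ * R + ‖b' - b‖ + K₁ * ε) := by gcongr
    _ = g (A x + b) + (R * K * ‖A' - A‖ + K * ‖b' - b‖ + K₁ * K * ε) := by ring

end

theorem augmented_loss_bound_general {D k n m : ℕ} {Y : Type*}
    (f : EuclideanSpace ℝ (Fin D) → EuclideanSpace ℝ (Fin k))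
    (A : EuclideanSpace ℝ (Fin D) → (EuclideanSpace ℝ (Fin D) →L[ℝ] EuclideanSpace ℝ (Fin k)))
    (b : EuclideanSpace ℝ (Fin D) → EuclideanSpace ℝ (Fin k))
    (hf : ∀ x, f x = A x x + b x)
    (ℓ : EuclideanSpace ℝ (Fin k) → Y → ℝ) (K₂ : NNReal)
    (hlip : ∀ y : Y, LipschitzWith K₂ (fun v => ℓ v y))
    (x : Fin n → EuclideanSpace ℝ (Fin D)) (y : Fin n → Y)
    (u : Fin n → Fin m → EuclideanSpace ℝ (Fin D))
    (R K₁ ε : ℝ)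
    (hx : ∀ i, ‖x i‖ ≤ R)
    (hA : ∀ z, ‖A z‖ ≤ K₁)
    (hu : ∀ i j, ‖u i j‖ ≤ ε) :
    ∑ i, ∑ j, ℓ (f (x i + u i j)) (y i)
      ≤ (∑ i, (m : ℝ) * ℓ (f (x i)) (y i))
        + R * K₂ * ∑ i, ∑ j, ‖A (x i + u i j) - A (x i)‖
        + K₂ * ∑ i, ∑ j, ‖b (x i + u i j) - b (x i)‖
        + K₁ * K₂ * m * n * ε := by
  calc ∑ i, ∑ j, ℓ (f (x i + u i j)) (y i)
      ≤ ∑ i, ∑ j, (ℓ (f (x i)) (y i) + (R * K₂ * ‖A (x i + u i j) - A (x i)‖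
        + K₂ * ‖b (x i + u i j) - b (x i)‖ + K₁ * K₂ * ε)) := by
        gcongr with i _ j _
        simp only [hf]
        exact (hlip (y i)).comp_affine_add_le (A (x i)) (A (x i + u i j)) (b (x i))
          (b (x i + u i j)) (hx i) (hA _) (hu i j)
    _ = (∑ i, (m : ℝ) * ℓ (f (x i)) (y i))
        + R * K₂ * ∑ i, ∑ j, ‖A (x i + u i j) - A (x i)‖
        + K₂ * ∑ i, ∑ j, ‖b (x i + u i j) - b (x i)‖
        + K₁ * K₂ * m * n * ε := by
        simp only [sum_add_distrib, sum_const, card_univ, Fintype.card_fin, nsmul_eq_mul,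
          mul_sum]
        ring

/-- Exact non-asymptotic version of Theorem 1: the augmented loss sum is bounded
by the original losses plus slope- and offset-variation terms plus `K₁ K₂ m n ε`. -/
theorem augmented_loss_bound {D k n m : ℕ} {Y : Type*}
    (f : EuclideanSpace ℝ (Fin D) → EuclideanSpace ℝ (Fin k))
    (A : EuclideanSpace ℝ (Fin D) → (EuclideanSpace ℝ (Fin D) →L[ℝ] EuclideanSpace ℝ (Fin k)))
    (b : EuclideanSpace ℝ (Fin D) → EuclideanSpace ℝ (Fin k))
    (hf : ∀ x, f x = A x x + b x)
    (ℓ : EuclideanSpace ℝ (Fin k) → Y → ℝ) (K₂ : NNReal)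
    (hconv : ∀ y : Y, ConvexOn ℝ Set.univ (fun v => ℓ v y))
    (hlip : ∀ y : Y, LipschitzWith K₂ (fun v => ℓ v y))
    (x : Fin n → EuclideanSpace ℝ (Fin D)) (y : Fin n → Y)
    (u : Fin n → Fin m → EuclideanSpace ℝ (Fin D))
    (R K₁ ε : ℝ)
    (hx : ∀ i, ‖x i‖ ≤ R)
    (hA : ∀ z, ‖A z‖ ≤ K₁)
    (hu : ∀ i j, ‖u i j‖ ≤ ε) :
    ∑ i, ∑ j, ℓ (f (x i + u i j)) (y i)
      ≤ (∑ i, (m : ℝ) * ℓ (f (x i)) (y i))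
        + R * K₂ * ∑ i, ∑ j, ‖A (x i + u i j) - A (x i)‖
        + K₂ * ∑ i, ∑ j, ‖b (x i + u i j) - b (x i)‖
        + K₁ * K₂ * m * n * ε :=
  augmented_loss_bound_general f A b hf ℓ K₂ hlip x y u R K₁ ε hx hA hu
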